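/- In the symmetric group, for j ≤ k − 1, k ≤ i and l ≤ j, the block-crossings satisfy [i,j][k,l] = [k−1,l][i,j+1], where [i,j] = σ_i σ_{i-1} ··· σ_j. -/

import Mathlib

/-- The adjacent transposition `σ_i = (i, i+1)` in the symmetric group on `ℕ`
(the letters of interest being the positive natural numbers). -/
def sigmaPerm (i : ℕ) : Equiv.Perm ℕ := Equiv.swap i (i + 1)

/-- The block-crossing `[i,j] = σ_i σ_{i-1} ⋯ σ_j` (for `j ≤ i`), defined recursively by
`[j,j] = σ_j` and `[i,j] = σ_i · [i-1,j]`. -/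
def blk (i j : ℕ) : Equiv.Perm ℕ :=
  (((List.range' j (i + 1 - j)).reverse).map sigmaPerm).prod

/-!
The block-crossing `[i,j]` (with `j ≤ i`) is the cycle `j ↦ i+1 ↦ i ↦ ⋯ ↦ j+1 ↦ j`: it sends
`j` to `i+1`, lowers every `x ∈ (j, i+1]` by one and fixes everything else. With this explicit
formula both sides of the exchange relation are explicit permutations of `ℕ`, and they agree
pointwise by a case analysis in linear arithmetic.
-/

theorem blk_self (j : ℕ) : blk j j = sigmaPerm j := by
  simp [blk]

theorem blk_succ_left {i j : ℕ} (h : j ≤ i + 1) :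
    blk (i + 1) j = sigmaPerm (i + 1) * blk i j := by
  rw [blk, blk, show i + 1 + 1 - j = i + 1 - j + 1 by omega, List.range'_1_concat,
    show j + (i + 1 - j) = i + 1 by omega]
  simp

theorem blk_apply {i j : ℕ} (h : j ≤ i) (x : ℕ) :
    blk i j x = if x = j then i + 1 else if j < x ∧ x ≤ i + 1 then x - 1 else x := by
  induction i, h using Nat.le_induction generalizing x with
  | base =>
    simp only [blk_self, sigmaPerm, Equiv.swap_apply_def]
    split_ifs <;> omega
  | succ i _ ih =>
    rw [blk_succ_left (by omega), Equiv.Perm.mul_apply, ih, sigmaPerm]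
    simp only [Equiv.swap_apply_def]
    split_ifs <;> omega

theorem blk_exchange_le (i j k l : ℕ) (hlj : l ≤ j)
    (hjk : j + 1 ≤ k) (hki : k ≤ i) :
    blk i j * blk k l = blk (k - 1) l * blk i (j + 1) := by
  ext x
  simp only [Equiv.Perm.mul_apply, blk_apply (by omega : j ≤ i), blk_apply (by omega : l ≤ k),
    blk_apply (by omega : l ≤ k - 1), blk_apply (by omega : j + 1 ≤ i)]
  split_ifs <;> omega
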